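/- For every integer q ≥ 3 and every integer n ≥ 3, every word of CBFS_q(n) is bifix-free, i.e. CBFS_q(n) ⊆ BF_q(n). -/

import Mathlib

/-!
If `u` is both a prefix and a suffix of `w = p ++ u`, then `p` and `u` are two prefixes of `w`
whose value-sums add up to that of `w`. In `B_q(n)` every nonempty prefix has value at least `1`
while the word has value `1`; in `C_q(n)` every proper prefix has nonnegative value while the word
has value `-1`. In `A_q(n)`, for `w = αβ`, both `p` and `u` have value `0`, and a zero-value proper
prefix cannot reach into the elevated word `β`; since `|α| ≤ |β|` this forces `u = α = β`, which is
exactly the excluded case.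
-/

/-- Value of a letter: 1 ↦ +1, 0 ↦ -1, other letters ↦ 0. -/
def mval (a : ℕ) : ℤ := if a = 1 then 1 else if a = 0 then -1 else 0

/-- Value-sum of a word. -/
def vsum (w : List ℕ) : ℤ := (w.map mval).sum

/-- A (q-2)-colored Motzkin word over the alphabet Z_q = {0,...,q-1}:
all letters < q, every prefix has nonnegative value-sum, total value-sum 0. -/
def IsMotzkinWord (q : ℕ) (w : List ℕ) : Prop :=
  (∀ a ∈ w, a < q) ∧ (∀ u, u <+: w → 0 ≤ vsum u) ∧ vsum w = 0

/-- The set 𝓜_{q-2}(n) of (q-2)-colored Motzkin words of length n. -/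
def MotzkinSet (q n : ℕ) : Set (List ℕ) := {w | w.length = n ∧ IsMotzkinWord q w}

/-- M_{q-2}(n), the number of (q-2)-colored Motzkin words of length n. -/
noncomputable def Mnum (q n : ℕ) : ℕ := (MotzkinSet q n).ncard

/-- The set Ê_{q-2}(n) of elevated (q-2)-colored Motzkin words of length n:
words 1α0 with α ∈ 𝓜_{q-2}(n-2). -/
def ElevatedSet (q n : ℕ) : Set (List ℕ) :=
  {w | w.length = n ∧ ∃ α ∈ MotzkinSet q (n - 2), w = 1 :: (α ++ [0])}

/-- The set A_q(n). -/
def SetA (q n : ℕ) : Set (List ℕ) :=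
  {w | ∃ i ≤ n / 2, ∃ α ∈ MotzkinSet q i, ∃ β ∈ ElevatedSet q (n - i), w = α ++ β} \
    {w | ∃ α ∈ ElevatedSet q (n / 2), ∃ β ∈ ElevatedSet q (n / 2), w = α ++ β}

/-- The set B_q(n). -/
def SetB (q n : ℕ) : Set (List ℕ) :=
  {w | ∃ i ≤ n / 2 - 1, ∃ α ∈ MotzkinSet q i, ∃ β ∈ ElevatedSet q (n - i - 1),
    w = 1 :: (α ++ β)}

/-- The set C_q(n): words γ0 with γ a (q-2)-colored Motzkin word of length n-1
having no factor which is an elevated Motzkin word of length j ≥ ⌈n/2⌉. -/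
def SetC (q n : ℕ) : Set (List ℕ) :=
  {w | ∃ γ ∈ MotzkinSet q (n - 1),
    (∀ j, (n + 1) / 2 ≤ j → ∀ β ∈ ElevatedSet q j, ¬ β <:+: γ) ∧ w = γ ++ [0]}

/-- The cross-bifix-free candidate set CBFS_q(n). -/
def CBFS (q n : ℕ) : Set (List ℕ) := SetA q n ∪ SetB q n ∪ SetC q n

/-- A word is bifix-free if no nonempty proper prefix of it is also a suffix of it. -/
def BifixFree (w : List ℕ) : Prop :=
  ∀ u, u <+: w → u ≠ [] → u.length < w.length → ¬ u <:+ w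

/-- BF_q(n): the set of bifix-free words of length n over Z_q. -/
def BF (q n : ℕ) : Set (List ℕ) := {w | w.length = n ∧ (∀ a ∈ w, a < q) ∧ BifixFree w}

/-- F_{k,q}(n): the number of words of length n over Z_q avoiding k consecutive 0's. -/
noncomputable def Fcount (k q n : ℕ) : ℕ :=
  {w : List ℕ | w.length = n ∧ (∀ a ∈ w, a < q) ∧ ¬ List.replicate k 0 <:+: w}.ncard

/-- The set S_{k,q}(n) of Bajic--Stojanovic--Chee--Kiah type words: words s of length n
over Z_q with s₁ = ⋯ = s_k = 0, s_{k+1} ≠ 0, s_n ≠ 0, and such that the subword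
s_{k+2} ⋯ s_{n-1} contains no k consecutive 0's. -/
def SetS (q k n : ℕ) : Set (List ℕ) :=
  {s | s.length = n ∧ (∀ a ∈ s, a < q) ∧ s.take k = List.replicate k 0 ∧
    s.getD k 0 ≠ 0 ∧ s.getLast? ≠ some 0 ∧
    ¬ List.replicate k 0 <:+: (s.drop (k + 1)).take (n - k - 2)}

theorem List.IsPrefix.prefix_or_eq_append {α : Type*} {v a b : List α} (h : v <+: a ++ b) :
    v <+: a ∨ ∃ t, t <+: b ∧ v = a ++ t := by
  rcases le_or_gt v.length a.length with hle | hlt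
  · exact Or.inl (List.prefix_of_prefix_length_le h (List.prefix_append a b) hle)
  · obtain ⟨t, rfl⟩ := List.prefix_of_prefix_length_le (List.prefix_append a b) h hlt.le
    exact Or.inr ⟨t, (List.prefix_append_right_inj a).mp h, rfl⟩

@[simp] lemma mval_zero : mval 0 = -1 := rfl

@[simp] lemma mval_one : mval 1 = 1 := rfl

@[simp] lemma vsum_nil : vsum [] = 0 := rfl

@[simp] lemma vsum_cons (a : ℕ) (l : List ℕ) : vsum (a :: l) = mval a + vsum l := by
  simp [vsum]

@[simp] lemma vsum_append (a b : List ℕ) : vsum (a ++ b) = vsum a + vsum b := by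
  simp [vsum]

lemma bifixFree_of_vsum_lt_two_mul {w : List ℕ}
    (h : ∀ v, v <+: w → v ≠ [] → v.length < w.length → vsum w < 2 * vsum v) :
    BifixFree w := by
  rintro u hu hu_ne hlt ⟨p, rfl⟩
  have hp_ne : p ≠ [] := by
    rintro rfl
    simp at hlt
  have hu_lt := h u hu hu_ne hlt
  have hp_lt := h p (List.prefix_append p u) hp_ne
    (by simpa using List.length_pos_of_ne_nil hu_ne)
  simp only [vsum_append] at hu_lt hp_lt
  linarith

section Motzkin

variable {q m : ℕ} {α β : List ℕ}

lemma IsMotzkinWord.append (hα : IsMotzkinWord q α) (hβ : IsMotzkinWord q β) :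
    IsMotzkinWord q (α ++ β) := by
  obtain ⟨hαq, hαpre, hα0⟩ := hα
  obtain ⟨hβq, hβpre, hβ0⟩ := hβ
  refine ⟨fun a ha => ?_, fun v hv => ?_, by simp [hα0, hβ0]⟩
  · rcases List.mem_append.mp ha with ha | ha
    exacts [hαq a ha, hβq a ha]
  · rcases hv.prefix_or_eq_append with hv | ⟨t, ht, rfl⟩
    · exact hαpre v hv
    · simpa [hα0] using hβpre t ht

lemma two_le_of_mem_elevatedSet (hβ : β ∈ ElevatedSet q m) : 2 ≤ m := by
  obtain ⟨rfl, γ, -, rfl⟩ := hβ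
  simp

lemma isMotzkinWord_of_mem_elevatedSet (hq : 2 ≤ q) (hβ : β ∈ ElevatedSet q m) :
    IsMotzkinWord q β := by
  obtain ⟨-, γ, ⟨-, hγq, hγpre, hγ0⟩, rfl⟩ := hβ
  refine ⟨fun a ha => ?_, fun v hv => ?_, by simp [hγ0]⟩
  · simp only [List.mem_cons, List.mem_append, List.not_mem_nil, or_false] at ha
    rcases ha with rfl | ha | rfl
    · omega
    · exact hγq a ha
    · omega
  · rcases List.prefix_cons_iff.mp hv with rfl | ⟨t, rfl, ht⟩
    · simp
    · rcases List.prefix_concat_iff.mp ht with rfl | ht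
      · simp [hγ0]
      · have := hγpre t ht
        simp only [vsum_cons, mval_one]
        linarith

lemma vsum_pos_of_prefix_of_mem_elevatedSet {v : List ℕ} (hβ : β ∈ ElevatedSet q m)
    (hv : v <+: β) (hv_ne : v ≠ []) (hlt : v.length < β.length) : 0 < vsum v := by
  obtain ⟨-, γ, ⟨-, -, hγpre, -⟩, rfl⟩ := hβ
  rcases List.prefix_cons_iff.mp hv with rfl | ⟨t, rfl, ht⟩
  · contradiction
  · rcases List.prefix_concat_iff.mp ht with rfl | ht
    · simp at hlt
    · have := hγpre t ht
      simp only [vsum_cons, mval_one]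
      linarith

lemma length_le_of_prefix_of_vsum_nonpos {v : List ℕ} (hα : IsMotzkinWord q α)
    (hβ : β ∈ ElevatedSet q m) (hv : v <+: α ++ β) (hv0 : vsum v ≤ 0)
    (hlt : v.length < (α ++ β).length) : v.length ≤ α.length := by
  rcases hv.prefix_or_eq_append with hv | ⟨t, ht, rfl⟩
  · exact hv.length_le
  · by_contra hgt
    have ht_ne : t ≠ [] := by
      rintro rfl
      simp at hgt
    have := vsum_pos_of_prefix_of_mem_elevatedSet hβ ht ht_ne (by simpa using hlt)
    rw [vsum_append, hα.2.2] at hv0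
    linarith

lemma bifixFree_append_of_mem_elevatedSet (hq : 2 ≤ q) (hα : IsMotzkinWord q α)
    (hβ : β ∈ ElevatedSet q m) (hle : α.length ≤ β.length) (hne : α ≠ β) :
    BifixFree (α ++ β) := by
  obtain ⟨-, hpre, htotal⟩ := hα.append (isMotzkinWord_of_mem_elevatedSet hq hβ)
  rintro u hu hu_ne hlt ⟨p, hpu⟩
  have hp : p <+: α ++ β := ⟨u, hpu⟩
  have hsum : vsum p + vsum u = 0 := by rw [← vsum_append, hpu, htotal]
  have hlen : p.length + u.length = α.length + β.length := by
    simpa using congrArg List.length hpu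
  have hu0 := hpre u hu
  have hp0 := hpre p hp
  have hu_le := length_le_of_prefix_of_vsum_nonpos hα hβ hu (by linarith) hlt
  have hp_le := length_le_of_prefix_of_vsum_nonpos hα hβ hp (by linarith)
    (by simpa [← hlen] using List.length_pos_of_ne_nil hu_ne)
  have huα : u = α :=
    (List.prefix_of_prefix_length_le hu (List.prefix_append α β) hu_le).eq_of_length (by omega)
  have hpα : p = α :=
    (List.prefix_of_prefix_length_le hp (List.prefix_append α β) hp_le).eq_of_length (by omega)
  subst hpα
  exact hne (huα.symm.trans (List.append_cancel_left hpu))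

end Motzkin

section CBFS

variable {q n : ℕ}

lemma setA_subset_BF (hq : 2 ≤ q) : SetA q n ⊆ BF q n := by
  rintro _ ⟨⟨i, hi, α, ⟨hαl, hα⟩, β, hβ, rfl⟩, hnot⟩
  have hβl : β.length = n - i := hβ.1
  refine ⟨by simp; omega, (hα.append (isMotzkinWord_of_mem_elevatedSet hq hβ)).1,
    bifixFree_append_of_mem_elevatedSet hq hα hβ (by omega) ?_⟩
  rintro rfl
  have hhalf : n - i = n / 2 := by omega
  rw [hhalf] at hβ
  exact hnot ⟨α, hβ, α, hβ, rfl⟩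

lemma setB_subset_BF (hq : 2 ≤ q) : SetB q n ⊆ BF q n := by
  rintro _ ⟨i, hi, α, ⟨hαl, hα⟩, β, hβ, rfl⟩
  have hβl : β.length = n - i - 1 := hβ.1
  have hm := two_le_of_mem_elevatedSet hβ
  obtain ⟨hletters, hpre, htotal⟩ := hα.append (isMotzkinWord_of_mem_elevatedSet hq hβ)
  refine ⟨by simp; omega, ?_, bifixFree_of_vsum_lt_two_mul ?_⟩
  · rintro a (_ | ⟨_, ha⟩)
    exacts [by omega, hletters a ha]
  · rintro v hv hv_ne -
    rcases List.prefix_cons_iff.mp hv with rfl | ⟨t, rfl, ht⟩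
    · contradiction
    · have := hpre t ht
      simp only [vsum_cons, mval_one, htotal]
      linarith

lemma setC_subset_BF (hq : 0 < q) (hn : 0 < n) : SetC q n ⊆ BF q n := by
  rintro _ ⟨γ, ⟨hγl, hγq, hγpre, hγ0⟩, -, rfl⟩
  refine ⟨by simp; omega, fun a ha => ?_, bifixFree_of_vsum_lt_two_mul ?_⟩
  · rcases List.mem_append.mp ha with ha | ha
    · exact hγq a ha
    · rw [List.mem_singleton.mp ha]
      exact hq
  · rintro v hv - hlt
    rcases List.prefix_concat_iff.mp hv with rfl | hv
    · simp at hlt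
    · have := hγpre v hv
      simp only [vsum_append, vsum_cons, vsum_nil, mval_zero, hγ0]
      linarith

end CBFS

/-- Every word of CBFS_q(n) is bifix-free, i.e. CBFS_q(n) ⊆ BF_q(n). -/
theorem cbfs_subset_bifix_free (q n : ℕ) (hq : 3 ≤ q) (hn : 3 ≤ n) :
    CBFS q n ⊆ BF q n :=
  Set.union_subset (Set.union_subset (setA_subset_BF (by omega)) (setB_subset_BF (by omega)))
    (setC_subset_BF (by omega) (by omega))
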